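/- arXiv:2307.06889 — 2 statements merged into one kernel-verified Lean document; each statement's English description precedes it below -/
import Mathlib

section
/- For a vaccinated set S in a rooted tree, the expected total reward satisfies r(S) = Σ_{i∈S} |N_i \ ∪_{j ∈ N_i ∩ S} N_j| · P(Z_i > τ), i.e., each node's contribution counts only descendants not already covered by vaccinated descendants of i. -/
open MeasureTheory ProbabilityTheory

/-- A finite rooted tree given by a parent function. -/
structure ParentTree (V : Type*) where
  root : V
  parent : V → V
  parent_root : parent root = root
  reaches_root : ∀ v, ∃ n, parent^[n] v = root
  acyclic : ∀ v n, 0 < n → parent^[n] v = v → v = root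

namespace ParentTree

variable {V : Type*}

/-- `anc i j` : `i` is a strict ancestor of `j`. -/
def anc (T : ParentTree V) (i j : V) : Prop :=
  i ≠ j ∧ ∃ n, T.parent^[n] j = i

/-- The set of strict descendants of `i`. -/
def desc (T : ParentTree V) (i : V) : Set V := {v | T.anc i v}

/-- The number of strict descendants of `i`. -/
noncomputable def nd (T : ParentTree V) (i : V) : ℕ := (T.desc i).ncard

/-- The expected total reward of vaccinating the set `S`, where `p i = P(Z_i > τ)`. -/
noncomputable def reward (T : ParentTree V) (p : V → ℝ) (S : Finset V) : ℝ :=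
  ∑ i ∈ S, ((T.nd i : ℝ) - ((⋃ j ∈ T.desc i ∩ (S : Set V), T.desc j).ncard : ℝ)) * p i

end ParentTree

open ParentTree MeasureTheory ProbabilityTheory

/-!
The exponential delays are almost surely nonnegative, so almost surely `Z` is nondecreasing
along every root-to-leaf path, and a vaccinated node below a saved vaccinated node is saved as
well. For such an outcome every saved node is credited to its deepest vaccinated ancestor, which
is then saved, so the saved set is the disjoint union of the credited sets of the saved vaccinated
nodes. Taking expectations, each vaccinated node `i` contributes the size of its credited set
times `P(τ < Z_i)`.
-/

namespace ParentTree

variable {V : Type*} (T : ParentTree V)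

noncomputable def depth (v : V) : ℕ := sInf {n | T.parent^[n] v = T.root}

theorem iterate_parent_root (n : ℕ) : T.parent^[n] T.root = T.root :=
  Function.iterate_fixed T.parent_root n

theorem iterate_parent_depth (v : V) : T.parent^[T.depth v] v = T.root :=
  Nat.sInf_mem (T.reaches_root v)

theorem depth_le_of_iterate_parent {v : V} {n : ℕ} (h : T.parent^[n] v = T.root) :
    T.depth v ≤ n :=
  Nat.sInf_le h

theorem depth_parent_lt {v : V} (hv : v ≠ T.root) : T.depth (T.parent v) < T.depth v := by
  obtain ⟨m, hm⟩ := Nat.exists_eq_succ_of_ne_zero fun h0 : T.depth v = 0 =>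
    hv (by simpa [h0] using T.iterate_parent_depth v)
  have h := T.iterate_parent_depth v
  rw [hm, Function.iterate_succ_apply] at h
  exact hm ▸ Nat.lt_succ_of_le (T.depth_le_of_iterate_parent h)

@[elab_as_elim]
theorem induction {P : V → Prop} (root : P T.root)
    (parent : ∀ v, v ≠ T.root → P (T.parent v) → P v) (v : V) : P v := by
  induction hn : T.depth v using Nat.strong_induction_on generalizing v with
  | _ n ih =>
    by_cases hv : v = T.root
    · exact hv ▸ root
    · exact parent v hv (ih _ (hn ▸ T.depth_parent_lt hv) _ rfl)

theorem apply_iterate_parent_le {α : Type*} [Preorder α] {f : V → α}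
    (hf : ∀ v, f (T.parent v) ≤ f v) (n : ℕ) (v : V) : f (T.parent^[n] v) ≤ f v := by
  induction n with
  | zero => rfl
  | succ n ih => exact (Function.iterate_succ_apply' T.parent n v ▸ hf _).trans ih

theorem apply_le_apply_of_anc {α : Type*} [Preorder α] {f : V → α}
    (hf : ∀ v, f (T.parent v) ≤ f v) {i j : V} (h : T.anc i j) : f i ≤ f j := by
  obtain ⟨-, n, rfl⟩ := h
  exact T.apply_iterate_parent_le hf n j

theorem depth_parent_le (v : V) : T.depth (T.parent v) ≤ T.depth v := by
  by_cases hv : v = T.root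
  · rw [hv, T.parent_root]
  · exact (T.depth_parent_lt hv).le

theorem depth_lt_of_anc {i j : V} (h : T.anc i j) : T.depth i < T.depth j := by
  obtain ⟨hne, n, rfl⟩ := h
  cases n with
  | zero => exact absurd rfl hne
  | succ n =>
    have hj : j ≠ T.root := by
      rintro rfl
      exact hne (T.iterate_parent_root _)
    rw [Function.iterate_succ_apply]
    exact (T.apply_iterate_parent_le T.depth_parent_le n _).trans_lt (T.depth_parent_lt hj)

theorem anc_trichotomy_of_anc {i j w : V} (hi : T.anc i w) (hj : T.anc j w) :
    i = j ∨ T.anc i j ∨ T.anc j i := by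
  obtain ⟨-, n, rfl⟩ := hi
  obtain ⟨-, m, rfl⟩ := hj
  by_cases hij : T.parent^[n] w = T.parent^[m] w
  · exact Or.inl hij
  rcases Nat.le_total n m with h | h
  · obtain ⟨k, rfl⟩ := Nat.exists_eq_add_of_le h
    exact Or.inr (Or.inr ⟨Ne.symm hij, k, by rw [← Function.iterate_add_apply, Nat.add_comm]⟩)
  · obtain ⟨k, rfl⟩ := Nat.exists_eq_add_of_le h
    exact Or.inr (Or.inl ⟨hij, k, by rw [← Function.iterate_add_apply, Nat.add_comm]⟩)

def credited (S : Finset V) (i : V) : Set V :=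
  T.desc i \ ⋃ j ∈ T.desc i ∩ (S : Set V), T.desc j

theorem pairwiseDisjoint_credited (S : Finset V) : (S : Set V).PairwiseDisjoint (T.credited S) := by
  intro i hi j hj hij
  rw [Function.onFun, Set.disjoint_left]
  rintro w ⟨hwi, hwi'⟩ ⟨hwj, hwj'⟩
  rcases T.anc_trichotomy_of_anc hwi hwj with h | h | h
  · exact hij h
  · exact hwi' (Set.mem_biUnion ⟨h, hj⟩ hwj)
  · exact hwj' (Set.mem_biUnion ⟨h, hi⟩ hwi)

/-- A node below a saved node of `S` is credited to its deepest ancestor in `S`, which is saved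
because `P` passes down the tree. -/
theorem setOf_desc_saved_eq_biUnion_credited (S : Finset V) {P : V → Prop} [DecidablePred P]
    (hP : ∀ i j, T.anc i j → P i → P j) :
    {w | ∃ i ∈ S, w ∈ T.desc i ∧ P i} = ⋃ i ∈ S.filter P, T.credited S i := by
  classical
  ext w
  simp only [Set.mem_ofPred_eq, Set.mem_iUnion, Finset.mem_filter, exists_prop]
  constructor
  · rintro ⟨i, hiS, hiw, hPi⟩
    obtain ⟨k, hk, hk_max⟩ := (S.filter (T.anc · w)).exists_max_image T.depth
      ⟨i, Finset.mem_filter.2 ⟨hiS, hiw⟩⟩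
    rw [Finset.mem_filter] at hk
    have hPk : P k := by
      rcases T.anc_trichotomy_of_anc hiw hk.2 with rfl | h | h
      · exact hPi
      · exact hP i k h hPi
      · exact absurd (T.depth_lt_of_anc h) (hk_max i (Finset.mem_filter.2 ⟨hiS, hiw⟩)).not_gt
    refine ⟨k, ⟨hk.1, hPk⟩, hk.2, ?_⟩
    simp only [Set.mem_iUnion₂]
    rintro ⟨j, ⟨hkj, hjS⟩, hjw⟩
    exact (hk_max j (Finset.mem_filter.2 ⟨hjS, hjw⟩)).not_gt (T.depth_lt_of_anc hkj)
  · rintro ⟨i, ⟨hiS, hPi⟩, hwi, -⟩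
    exact ⟨i, hiS, hwi, hPi⟩

theorem ncard_setOf_desc_saved [Finite V] (S : Finset V) {P : V → Prop} [DecidablePred P]
    (hP : ∀ i j, T.anc i j → P i → P j) :
    {w | ∃ i ∈ S, w ∈ T.desc i ∧ P i}.ncard =
      ∑ i ∈ S.filter P, (T.credited S i).ncard := by
  rw [T.setOf_desc_saved_eq_biUnion_credited S hP, ← finsum_mem_coe_finset,
    ← (S.filter P).finite_toSet.ncard_biUnion (fun _ _ => Set.toFinite _)]
  · simp only [Finset.mem_coe]
  · exact (T.pairwiseDisjoint_credited S).subset (Finset.coe_subset.2 (Finset.filter_subset _ _))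

end ParentTree


theorem ae_nonneg_of_map_eq_expMeasure {Ω : Type*} [MeasurableSpace Ω] {μ : Measure Ω}
    {X : Ω → ℝ} (hX : Measurable X) {lam : ℝ} (h : μ.map X = expMeasure lam) :
    ∀ᵐ ω ∂μ, 0 ≤ X ω := by
  refine ae_of_ae_map hX.aemeasurable ?_
  rw [h, ae_iff]
  simp only [not_le]
  change expMeasure lam (Set.Iio 0) = 0
  rw [expMeasure, gammaMeasure, withDensity_apply _ measurableSet_Iio]
  exact lintegral_gammaPDF_of_nonpos le_rfl

theorem expected_total_reward_general
    {V : Type*} [Fintype V] (T : ParentTree V)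
    {Ω : Type*} [MeasureSpace Ω] [IsProbabilityMeasure (ℙ : Measure Ω)]
    (lam : ℝ)
    (Z W : V → Ω → ℝ) (τ : Ω → ℝ)
    (hWmeas : ∀ v, Measurable (W v)) (hτmeas : Measurable τ)
    (hWdist : ∀ v, v ≠ T.root → Measure.map (W v) ℙ = expMeasure lam)
    (hZroot : ∀ ω, Z T.root ω = 0)
    (hZ : ∀ v, v ≠ T.root → ∀ ω, Z v ω = Z (T.parent v) ω + W v ω)
    (S : Finset V) :
    ∫ ω, (({w | ∃ i ∈ S, w ∈ T.desc i ∧ τ ω < Z i ω} : Set V).ncard : ℝ) ∂ℙ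
      = ∑ i ∈ S, ((T.desc i \ ⋃ j ∈ T.desc i ∩ (S : Set V), T.desc j).ncard : ℝ)
          * (ℙ {ω | τ ω < Z i ω}).toReal := by
  classical
  have hZmeas : ∀ v, Measurable (Z v) := T.induction
    (funext hZroot ▸ measurable_const) fun v hv ih => funext (hZ v hv) ▸ ih.add (hWmeas v)
  have hsaved : ∀ i, MeasurableSet {ω | τ ω < Z i ω} :=
    fun i => measurableSet_lt hτmeas (hZmeas i)
  have hWnonneg : ∀ᵐ ω ∂ℙ, ∀ v, v ≠ T.root → 0 ≤ W v ω :=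
    ae_all_iff.2 fun v => by
      by_cases hv : v = T.root
      · exact .of_forall fun _ h => absurd hv h
      · filter_upwards [ae_nonneg_of_map_eq_expMeasure (hWmeas v) (hWdist v hv)] with ω h _ using h
  have hcount : ∀ᵐ ω ∂ℙ, (({w | ∃ i ∈ S, w ∈ T.desc i ∧ τ ω < Z i ω} : Set V).ncard : ℝ)
      = ∑ i ∈ S, {ω | τ ω < Z i ω}.indicator (fun _ => ((T.credited S i).ncard : ℝ)) ω := by
    filter_upwards [hWnonneg] with ω hω
    have hZ_mono : ∀ v, Z (T.parent v) ω ≤ Z v ω := fun v => by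
      by_cases hv : v = T.root
      · rw [hv, T.parent_root]
      · linarith [hZ v hv ω, hω v hv]
    rw [T.ncard_setOf_desc_saved S fun i j hij hi =>
        hi.trans_le (T.apply_le_apply_of_anc (f := (Z · ω)) hZ_mono hij),
      Nat.cast_sum, Finset.sum_filter]
    simp only [Set.indicator_apply, Set.mem_ofPred_eq]
  rw [integral_congr_ae hcount,
    integral_finsetSum S fun i _ => (integrable_const _).indicator (hsaved i)]
  refine Finset.sum_congr rfl fun i _ => ?_
  rw [integral_indicator_const _ (hsaved i), smul_eq_mul, mul_comm]
  rfl

/-- In a finite rooted tree where infection starts at the root at time 0 and spreads along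
edges with i.i.d. `Exp(λ)` delays (so `Z_i` is the sum of the delays on the root-to-`i`
path), and `τ` is an independent random immunization time, the expected number of saved
nodes when vaccinating the set `S` equals
`Σ_{i∈S} |N_i \ ∪_{j ∈ N_i ∩ S} N_j| · P(Z_i > τ)`. -/
theorem expected_total_reward
    {V : Type*} [Fintype V] (T : ParentTree V)
    {Ω : Type*} [MeasureSpace Ω] [IsProbabilityMeasure (ℙ : Measure Ω)]
    (lam : ℝ) (hlam : 0 < lam)
    (Z W : V → Ω → ℝ) (τ : Ω → ℝ)
    (hWmeas : ∀ v, Measurable (W v)) (hτmeas : Measurable τ)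
    (hWdist : ∀ v, v ≠ T.root → Measure.map (W v) ℙ = expMeasure lam)
    (hindep : iIndepFun (Sum.elim W (fun _ : Unit => τ)) ℙ)
    (hZroot : ∀ ω, Z T.root ω = 0)
    (hZ : ∀ v, v ≠ T.root → ∀ ω, Z v ω = Z (T.parent v) ω + W v ω)
    (S : Finset V) :
    ∫ ω, (({w | ∃ i ∈ S, w ∈ T.desc i ∧ τ ω < Z i ω} : Set V).ncard : ℝ) ∂ℙ
      = ∑ i ∈ S, ((T.desc i \ ⋃ j ∈ T.desc i ∩ (S : Set V), T.desc j).ncard : ℝ)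
          * (ℙ {ω | τ ω < Z i ω}).toReal :=
  expected_total_reward_general T lam Z W τ hWmeas hτmeas hWdist hZroot hZ S
end

section
/- The reward function r(S) = Σ_{i∈S} (n_i - |∪_{j∈N_i∩S} N_j|)·p_i, where p_i = P(Z_i > τ), is monotone: for any S ⊆ V and u ∉ S, r(S ∪ {u}) ≥ r(S). -/
open MeasureTheory ProbabilityTheory

/-!
Adding `u` to `S` creates the new term `(n_u - |D_u(S)|) p_u ≥ 0`, where `D_i(S)` is the
blocked set `⋃_{j ∈ N_i ∩ S} N_j`. The only old term that can shrink is that of the deepest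
ancestor `w` of `u` in `S`: for every higher ancestor `i` the new block `N_u` already lies in
`N_w ⊆ D_i(S)`. The blocked set of `w` grows by at most
`|N_u \ D_w(S)| ≤ |N_u \ D_u(S)| = n_u - |D_u(S)|`, and it is weighted by `p_w ≤ p_u`, so the
loss at `w` is at most the gain at `u`.
-/

lemma Set.ncard_union_add_ncard_le {α : Type*} {A B C : Set α} (hAB : A ⊆ B) (hAC : A ⊆ C)
    (hB : B.Finite := by toFinite_tac) (hC : C.Finite := by toFinite_tac) :
    (B ∪ C).ncard + A.ncard ≤ B.ncard + C.ncard := by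
  rw [← Set.ncard_union_add_ncard_inter B C hB hC]
  gcongr
  · exact hB.inter_of_left C
  · exact Set.subset_inter hAB hAC

namespace ParentTree

variable {V : Type*} (T : ParentTree V)

lemma anc_trans {i j k : V} (hij : T.anc i j) (hjk : T.anc j k) : T.anc i k := by
  obtain ⟨hij, n, rfl⟩ := hij
  obtain ⟨hjk, m, rfl⟩ := hjk
  refine ⟨fun hik => ?_, n + m, Function.iterate_add_apply ..⟩
  have hn : 0 < n := Nat.pos_of_ne_zero fun hn => hij (by simp [hn])
  have hroot : k = T.root :=
    T.acyclic k (n + m) (by omega) ((Function.iterate_add_apply ..).trans hik)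
  exact hjk (by rw [hroot, Function.iterate_fixed T.parent_root])

lemma self_notMem_desc (u : V) : u ∉ T.desc u := fun h => h.1 rfl

lemma desc_subset_of_anc {i j : V} (hij : T.anc i j) : T.desc j ⊆ T.desc i :=
  fun _ hv => T.anc_trans hij hv

lemma exists_deepest_anc_mem {S : Finset V} {u : V} (h : ∃ i ∈ S, T.anc i u) :
    ∃ w ∈ S, T.anc w u ∧ ∀ i ∈ S, T.anc i u → i = w ∨ T.anc i w := by
  classical
  have hex : ∃ n, T.parent^[n] u ∈ S ∧ T.parent^[n] u ≠ u := by
    obtain ⟨_, hi, hne, n, rfl⟩ := h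
    exact ⟨n, hi, hne⟩
  obtain ⟨hwS, hwu⟩ := Nat.find_spec hex
  refine ⟨_, hwS, ⟨hwu, _, rfl⟩, ?_⟩
  rintro _ hi ⟨hiu, m, rfl⟩
  by_cases heq : T.parent^[m] u = T.parent^[Nat.find hex] u
  · exact Or.inl heq
  · refine Or.inr ⟨heq, m - Nat.find hex, ?_⟩
    rw [← Function.iterate_add_apply, Nat.sub_add_cancel (Nat.find_min' hex ⟨hi, hiu⟩)]

def blocked (S : Finset V) (i : V) : Set V := ⋃ j ∈ T.desc i ∩ (S : Set V), T.desc j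

lemma reward_eq (p : V → ℝ) (S : Finset V) :
    T.reward p S = ∑ i ∈ S, ((T.nd i : ℝ) - (T.blocked S i).ncard) * p i := rfl

lemma blocked_subset_desc (S : Finset V) (i : V) : T.blocked S i ⊆ T.desc i :=
  Set.iUnion₂_subset fun _ hj => T.desc_subset_of_anc hj.1

lemma desc_subset_blocked {S : Finset V} {i j : V} (hij : T.anc i j) (hj : j ∈ S) :
    T.desc j ⊆ T.blocked S i :=
  Set.subset_iUnion₂_of_subset j ⟨hij, hj⟩ subset_rfl

lemma blocked_subset_of_anc (S : Finset V) {i u : V} (h : T.anc i u) :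
    T.blocked S u ⊆ T.blocked S i :=
  Set.iUnion₂_subset fun _ hj => T.desc_subset_blocked (T.anc_trans h hj.1) hj.2

variable [DecidableEq V]

lemma blocked_insert_of_notMem_desc (S : Finset V) {i u : V} (h : u ∉ T.desc i) :
    T.blocked (insert u S) i = T.blocked S i := by
  have hS : T.desc i ∩ ((insert u S : Finset V) : Set V) = T.desc i ∩ S := by
    rw [Finset.coe_insert, Set.inter_insert_of_notMem h]
  rw [blocked, hS, blocked]

lemma blocked_insert_of_mem_desc (S : Finset V) {i u : V} (h : u ∈ T.desc i) :
    T.blocked (insert u S) i = T.blocked S i ∪ T.desc u := by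
  rw [blocked, Finset.coe_insert, Set.inter_insert_of_mem h, Set.biUnion_insert, Set.union_comm,
    blocked]

lemma blocked_insert_of_anc_of_anc (S : Finset V) {i w u : V} (hiw : T.anc i w) (hwS : w ∈ S)
    (hwu : T.anc w u) : T.blocked (insert u S) i = T.blocked S i := by
  rw [T.blocked_insert_of_mem_desc S (T.anc_trans hiw hwu), Set.union_eq_left]
  exact (T.desc_subset_of_anc hwu).trans (T.desc_subset_blocked hiw hwS)

variable [Finite V]

lemma ncard_blocked_insert_sub_le (S : Finset V) {w u : V} (hwu : T.anc w u) :
    ((T.blocked (insert u S) w).ncard : ℝ) - (T.blocked S w).ncard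
      ≤ (T.nd u : ℝ) - (T.blocked S u).ncard := by
  have h : ((T.blocked S w ∪ T.desc u).ncard : ℝ) + (T.blocked S u).ncard
      ≤ (T.blocked S w).ncard + (T.desc u).ncard := by
    exact_mod_cast Set.ncard_union_add_ncard_le (T.blocked_subset_of_anc S hwu)
      (T.blocked_subset_desc S u)
  rw [T.blocked_insert_of_mem_desc S hwu, nd]
  linarith

lemma sum_loss_le_gain (p : V → ℝ) (hp0 : ∀ v, 0 ≤ p v)
    (hp_anc : ∀ i j, T.anc i j → p i ≤ p j) (S : Finset V) (u : V) :
    ∑ i ∈ S, (((T.blocked (insert u S) i).ncard : ℝ) - (T.blocked S i).ncard) * p i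
      ≤ ((T.nd u : ℝ) - (T.blocked S u).ncard) * p u := by
  have hgain : 0 ≤ (T.nd u : ℝ) - (T.blocked S u).ncard := by
    rw [sub_nonneg, nd]
    exact_mod_cast Set.ncard_le_ncard (T.blocked_subset_desc S u)
  by_cases hanc : ∃ i ∈ S, T.anc i u
  · obtain ⟨w, hwS, hwu, hdeep⟩ := T.exists_deepest_anc_mem hanc
    have hunchanged : ∀ i ∈ S, i ≠ w → T.blocked (insert u S) i = T.blocked S i := by
      intro i hi hiw
      by_cases hiu : T.anc i u
      · exact T.blocked_insert_of_anc_of_anc S ((hdeep i hi hiu).resolve_left hiw) hwS hwu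
      · exact T.blocked_insert_of_notMem_desc S hiu
    rw [Finset.sum_eq_single_of_mem w hwS fun i hi hiw => by simp [hunchanged i hi hiw]]
    exact mul_le_mul (T.ncard_blocked_insert_sub_le S hwu) (hp_anc w u hwu) (hp0 w) hgain
  · push Not at hanc
    rw [Finset.sum_eq_zero fun i hi => by simp [T.blocked_insert_of_notMem_desc S (hanc i hi)]]
    exact mul_nonneg hgain (hp0 u)

end ParentTree

open ParentTree

theorem reward_monotone_general {V : Type*} [Fintype V] [DecidableEq V] (T : ParentTree V) (p : V → ℝ)
    (hp0 : ∀ v, 0 ≤ p v)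
    (hpanc : ∀ i j, T.anc i j → p i < p j)
    (S : Finset V) (u : V) (hu : u ∉ S) :
    T.reward p S ≤ T.reward p (insert u S) := by
  have hsplit : ∑ i ∈ S, ((T.nd i : ℝ) - (T.blocked S i).ncard) * p i
      = ∑ i ∈ S, ((T.nd i : ℝ) - (T.blocked (insert u S) i).ncard) * p i
        + ∑ i ∈ S, (((T.blocked (insert u S) i).ncard : ℝ) - (T.blocked S i).ncard) * p i := by
    rw [← Finset.sum_add_distrib]
    exact Finset.sum_congr rfl fun _ _ => by ring
  rw [T.reward_eq, T.reward_eq, Finset.sum_insert hu,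
    T.blocked_insert_of_notMem_desc S (T.self_notMem_desc u), hsplit]
  linarith [T.sum_loss_le_gain p hp0 (fun i j h => (hpanc i j h).le) S u]

/-- The reward function `r(S) = Σ_{i∈S} (n_i - |∪_{j∈N_i∩S} N_j|)·p_i` is monotone:
adding any node `u ∉ S` does not decrease the reward. -/
theorem reward_monotone {V : Type*} [Fintype V] [DecidableEq V] (T : ParentTree V) (p : V → ℝ)
    (hp0 : ∀ v, 0 ≤ p v) (hp1 : ∀ v, p v ≤ 1)
    (hpanc : ∀ i j, T.anc i j → p i < p j)
    (S : Finset V) (u : V) (hu : u ∉ S) :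
    T.reward p S ≤ T.reward p (insert u S) :=
  reward_monotone_general T p hp0 hpanc S u hu
end
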